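/- arXiv:2304.10223 — 2 statements merged into one kernel-verified Lean document; each statement's English description precedes it below -/
import Mathlib

section
/- Let D be a combinatorial arc datum with a parity function, and write Gtl = Gtl(D). Let ν : Gtl × Gtl → Gtl be a ℂ-bilinear map such that ν(1_a, x) = ν(x, 1_a) = 0 for all a ∈ 𝒜 and all x ∈ Gtl, and which satisfies the graded Hochschild 2-cocycle identity: for all paths x, y, z, (−1)^{|y|} ν(x, y)·z + (−1)^{|z|} ν(x·y, z) − (−1)^{|z|} x·ν(y, z) − (−1)^{|y|+|z|} ν(x, y·z) = 0. Then there exists a ℂ-linear map ε : Gtl → Gtl with ε(1_a) = 0 for all a ∈ 𝒜 and ε(α) = 0 for all α ∈ H, such that for all paths p, q with p·q ≠ 0 in Gtl one has ν(p, q) = (−1)^{|q|}( ε(p)·q + p·ε(q) − ε(p·q) ). -/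
open scoped Classical

/-- A combinatorial arc datum encoding an arc collection splitting a closed
oriented marked surface. -/
structure ArcDatum where
  /-- the set of arcs -/
  A : Type
  /-- the set of angle arrows -/
  H : Type
  [fintypeA : Fintype A]
  [fintypeH : Fintype H]
  [decEqA : DecidableEq A]
  [decEqH : DecidableEq H]
  /-- head of an angle arrow -/
  hd : H → A
  /-- tail of an angle arrow -/
  tl : H → A
  /-- the face permutation -/
  σF : Equiv.Perm H
  /-- the marked point permutation -/
  σM : Equiv.Perm H
  tl_σF : ∀ α, tl (σF α) = hd α
  tl_σM : ∀ α, tl (σM α) = hd α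
  σF_ne_σM : ∀ α, σF α ≠ σM α
  out_mem : ∀ α β, tl β = hd α → β = σF α ∨ β = σM α
  two_in : ∀ a, Fintype.card {e : H // hd e = a} = 2
  two_out : ∀ a, Fintype.card {e : H // tl e = a} = 2
  connected : ∀ a b : A,
    Relation.ReflTransGen (fun x y => ∃ e, (tl e = x ∧ hd e = y) ∨ (tl e = y ∧ hd e = x)) a b

attribute [instance] ArcDatum.fintypeA ArcDatum.fintypeH ArcDatum.decEqA ArcDatum.decEqH

namespace ArcDatum

/-- Generators of the path algebra: one idempotent per arc, one generator
per angle arrow. -/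
inductive Gen (D : ArcDatum) : Type
  | vertex : D.A → Gen D
  | arrow : D.H → Gen D

/-- The defining relations of the gentle algebra, presented as a quotient of the
free algebra on the vertex idempotents and the angle arrows: the standard path
algebra relations together with the gentle relations `σF α * α = 0`. -/
inductive GtlRel (D : ArcDatum) : FreeAlgebra ℂ (Gen D) → FreeAlgebra ℂ (Gen D) → Prop
  | vertex_mul (a b : D.A) :
      GtlRel D (FreeAlgebra.ι ℂ (Gen.vertex a) * FreeAlgebra.ι ℂ (Gen.vertex b))
        (if a = b then FreeAlgebra.ι ℂ (Gen.vertex a) else 0)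
  | vertex_sum :
      GtlRel D (∑ a : D.A, FreeAlgebra.ι ℂ (Gen.vertex a)) 1
  | head_mul (α : D.H) :
      GtlRel D (FreeAlgebra.ι ℂ (Gen.vertex (D.hd α)) * FreeAlgebra.ι ℂ (Gen.arrow α))
        (FreeAlgebra.ι ℂ (Gen.arrow α))
  | mul_tail (α : D.H) :
      GtlRel D (FreeAlgebra.ι ℂ (Gen.arrow α) * FreeAlgebra.ι ℂ (Gen.vertex (D.tl α)))
        (FreeAlgebra.ι ℂ (Gen.arrow α))
  | gentle (α : D.H) :
      GtlRel D (FreeAlgebra.ι ℂ (Gen.arrow (D.σF α)) * FreeAlgebra.ι ℂ (Gen.arrow α)) 0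

/-- The gentle algebra `Gtl(D)` of the arc datum `D`. -/
abbrev Gtl (D : ArcDatum) : Type := RingQuot (GtlRel D)

variable (D : ArcDatum)

/-- Image in the gentle algebra of the length zero path `1_a` at an arc `a`. -/
noncomputable def vtx (a : D.A) : D.Gtl :=
  RingQuot.mkAlgHom ℂ (GtlRel D) (FreeAlgebra.ι ℂ (Gen.vertex a))

/-- Image in the gentle algebra of an angle arrow. -/
noncomputable def arr (α : D.H) : D.Gtl :=
  RingQuot.mkAlgHom ℂ (GtlRel D) (FreeAlgebra.ι ℂ (Gen.arrow α))

/-- A list `[β_k, …, β_1]` of angle arrows is composable when it is a path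
`β_k ⋯ β_1` of the quiver, i.e. `t (β_{i+1}) = h (β_i)`. -/
def Composable (l : List D.H) : Prop := l.Chain' fun x y => D.tl x = D.hd y

/-- Image in the gentle algebra of the path `β_k ⋯ β_1` given by a composable
list `[β_k, …, β_1]`. -/
noncomputable def pathProd (l : List D.H) : D.Gtl := (l.map D.arr).prod

/-- The setoid on angle arrows whose classes are the marked points. -/
def mSetoid : Setoid D.H :=
  ⟨fun x y => D.σM.SameCycle x y,
    ⟨fun _ => Equiv.Perm.SameCycle.refl _ _, fun h => h.symm, fun h h' => h.trans h'⟩⟩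

/-- The setoid on angle arrows whose classes are the faces. -/
def fSetoid : Setoid D.H :=
  ⟨fun x y => D.σF.SameCycle x y,
    ⟨fun _ => Equiv.Perm.SameCycle.refl _ _, fun h => h.symm, fun h h' => h.trans h'⟩⟩

/-- The set of marked points: orbits of `σM`. -/
def MarkedPt : Type := Quotient D.mSetoid

/-- The set of faces: orbits of `σF`. -/
def Face : Type := Quotient D.fSetoid

noncomputable instance : Fintype D.MarkedPt :=
  @Quotient.fintype _ _ D.mSetoid (Classical.decRel _)

noncomputable instance : Fintype D.Face :=
  @Quotient.fintype _ _ D.fSetoid (Classical.decRel _)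

/-- The marked point `m(α)` around which the angle arrow `α` turns. -/
def mCls (α : D.H) : D.MarkedPt := @Quotient.mk _ D.mSetoid α

/-- The face `f(α)` in which the angle arrow `α` lies. -/
def faceCls (α : D.H) : D.Face := @Quotient.mk _ D.fSetoid α

/-- The `σM`-orbit of an angle arrow, as a finset. -/
noncomputable def mOrbitFinset (α : D.H) : Finset D.H :=
  Set.Finite.toFinset (Set.toFinite {β | D.σM.SameCycle α β})

/-- The `σF`-orbit of an angle arrow, as a finset. -/
noncomputable def fOrbitFinset (α : D.H) : Finset D.H :=
  Set.Finite.toFinset (Set.toFinite {β | D.σF.SameCycle α β})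

/-- The number of angle arrows around the marked point of `α`. -/
noncomputable def mCard (α : D.H) : ℕ := (D.mOrbitFinset α).card

/-- The list `[σM^(n-1) α, …, σM α, α]`, i.e. the path `σM^(n-1)(α) ⋯ σM(α) · α`. -/
noncomputable def turnList (α : D.H) (n : ℕ) : List D.H :=
  ((List.range n).map fun i => (D.σM ^ i) α).reverse

/-- The full turn starting at the angle arrow `α`: the image in the gentle
algebra of the path `σM^(k-1)(α) ⋯ σM(α) · α` where `k` is the size of the
`σM`-orbit of `α`. -/
noncomputable def fullTurn (α : D.H) : D.Gtl := D.pathProd (D.turnList α (D.mCard α))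

/-- The central element `ℓ_{m(α)}`: the sum of the full turns at the angle
arrows around the marked point of `α`. -/
noncomputable def ellArr (α : D.H) : D.Gtl := ∑ β ∈ D.mOrbitFinset α, D.fullTurn β

/-- The central element `ℓ_m` attached to a marked point `m`. -/
noncomputable def ell (m : D.MarkedPt) : D.Gtl := D.ellArr m.out

/-- The no monogons or digons condition: every face has at least 3 angles. -/
def NMD : Prop := ∀ α : D.H, 3 ≤ (D.fOrbitFinset α).card

/-- The set of endpoints of an arc: the marked points of the two angle arrows
with head `a`. -/
def endpoints (a : D.A) : Set D.MarkedPt := {m | ∃ α, D.hd α = a ∧ D.mCls α = m}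

/-- The no loops or two-cycles condition: every arc has two distinct endpoints
and two distinct arcs share at most one endpoint. -/
def NL2 : Prop :=
  (∀ (a : D.A) (α β : D.H), D.hd α = a → D.hd β = a → α ≠ β → D.mCls α ≠ D.mCls β) ∧
  ∀ a b : D.A, a ≠ b → (D.endpoints a ∩ D.endpoints b).Subsingleton

end ArcDatum

namespace ArcDatum

variable (D : ArcDatum)

/-- The parity of a path, given a parity function on the angle arrows. -/
def listPar (par : D.H → ZMod 2) (l : List D.H) : ZMod 2 := (l.map par).sum

/-- Index type for the paths of the quiver: either a length-zero path `1_a`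
or a composable list `[β_k, …, β_1]` of angle arrows. -/
def PathIdx (D : ArcDatum) : Type :=
  D.A ⊕ {l : List D.H // l ≠ [] ∧ D.Composable l}

/-- The image in the gentle algebra of a path. -/
noncomputable def pathElem : PathIdx D → D.Gtl
  | Sum.inl a => D.vtx a
  | Sum.inr l => D.pathProd l.1

/-- The parity of a path (length-zero paths have parity `0`). -/
def pathPar (par : D.H → ZMod 2) : PathIdx D → ZMod 2
  | Sum.inl _ => 0
  | Sum.inr l => D.listPar par l.1

end ArcDatum

/-!
Write `s(q) = (-1)^{|q|}`. On nonzero paths put `ε(β) = 0` and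
`ε(β q) = β ε(q) - s(q) ν(β, q)`, which is the required identity for `p = β`. The cocycle
identity for the triple `(β, y, q)` propagates the identity from `(y, q)` to `(β y, q)`, and
the normalization of `ν` makes `ε` commute with left and right multiplication by the
idempotents `1_a`. To extend `ε` linearly, the path expansion of an element is read off from
the action of `Gtl(D)` on formal combinations of paths (arrows concatenate on the left unless
a gentle relation kills the product), applied to `1 = ∑ₐ 1ₐ`.
-/

theorem neg_one_pow_mul_self {R : Type*} [Monoid R] [HasDistribNeg R] (n : ℕ) :
    (-1 : R) ^ n * (-1) ^ n = 1 := by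
  rw [← pow_add, ← two_mul, pow_mul, neg_one_sq, one_pow]

namespace ArcDatum

variable {D : ArcDatum}

theorem vtx_mul_vtx (a b : D.A) : D.vtx a * D.vtx b = if a = b then D.vtx a else 0 := by
  simpa [vtx, apply_ite (RingQuot.mkAlgHom ℂ (GtlRel D))] using
    RingQuot.mkAlgHom_rel ℂ (GtlRel.vertex_mul (D := D) a b)

theorem vtx_hd_mul_arr (α : D.H) : D.vtx (D.hd α) * D.arr α = D.arr α := by
  simpa [vtx, arr] using RingQuot.mkAlgHom_rel ℂ (GtlRel.head_mul (D := D) α)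

theorem arr_mul_vtx_tl (α : D.H) : D.arr α * D.vtx (D.tl α) = D.arr α := by
  simpa [vtx, arr] using RingQuot.mkAlgHom_rel ℂ (GtlRel.mul_tail (D := D) α)

theorem arr_σF_mul_arr (α : D.H) : D.arr (D.σF α) * D.arr α = 0 := by
  simpa [arr] using RingQuot.mkAlgHom_rel ℂ (GtlRel.gentle (D := D) α)

theorem vtx_mul_arr_of_ne {a : D.A} {α : D.H} (h : a ≠ D.hd α) : D.vtx a * D.arr α = 0 := by
  rw [← vtx_hd_mul_arr α, ← mul_assoc, vtx_mul_vtx, if_neg h, zero_mul]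

theorem arr_mul_vtx_of_ne {α : D.H} {a : D.A} (h : D.tl α ≠ a) : D.arr α * D.vtx a = 0 := by
  rw [← arr_mul_vtx_tl α, mul_assoc, vtx_mul_vtx, if_neg h, mul_zero]

theorem tl_eq_hd_of_arr_mul_arr_ne_zero {α β : D.H} (h : D.arr α * D.arr β ≠ 0) :
    D.tl α = D.hd β := by
  contrapose! h
  rw [← arr_mul_vtx_tl α, mul_assoc, vtx_mul_arr_of_ne h, mul_zero]

theorem ne_σF_of_arr_mul_arr_ne_zero {α β : D.H} (h : D.arr α * D.arr β ≠ 0) :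
    α ≠ D.σF β := by
  rintro rfl
  exact h (arr_σF_mul_arr β)

theorem pathProd_cons (β : D.H) (l : List D.H) :
    D.pathProd (β :: l) = D.arr β * D.pathProd l := by
  simp [pathProd]

theorem pathProd_singleton (β : D.H) : D.pathProd [β] = D.arr β := by
  simp [pathProd]

theorem pathProd_append (l m : List D.H) :
    D.pathProd (l ++ m) = D.pathProd l * D.pathProd m := by
  simp [pathProd]

theorem listPar_append (par : D.H → ZMod 2) (l m : List D.H) :
    D.listPar par (l ++ m) = D.listPar par l + D.listPar par m := by
  simp [listPar]

theorem vtx_mul_pathProd_cons (a : D.A) (β : D.H) (l : List D.H) :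
    D.vtx a * D.pathProd (β :: l) = if a = D.hd β then D.pathProd (β :: l) else 0 := by
  split_ifs with h
  · rw [h, pathProd_cons, ← mul_assoc, vtx_hd_mul_arr]
  · rw [pathProd_cons, ← mul_assoc, vtx_mul_arr_of_ne h, zero_mul]

theorem pathProd_mul_vtx {l : List D.H} (hl : l ≠ []) (a : D.A) :
    D.pathProd l * D.vtx a = if D.tl (l.getLast hl) = a then D.pathProd l else 0 := by
  conv_lhs => rw [← List.dropLast_append_getLast hl, pathProd_append, pathProd_singleton,
    mul_assoc]
  split_ifs with h
  · rw [← h, arr_mul_vtx_tl, ← pathProd_singleton, ← pathProd_append,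
      List.dropLast_append_getLast]
  · rw [arr_mul_vtx_of_ne h, mul_zero]

/-- Basis of the module of paths: `inl a` stands for `1_a` and `inr (β, l)` for `β :: l`. -/
abbrev PathCode (D : ArcDatum) : Type := D.A ⊕ (D.H × List D.H)

noncomputable def genAct : Gen D → D.PathCode → D.PathCode →₀ ℂ
  | .vertex a, .inl b => if a = b then .single (.inl b) 1 else 0
  | .vertex a, .inr (β, l) => if a = D.hd β then .single (.inr (β, l)) 1 else 0
  | .arrow α, .inl b => if D.tl α = b then .single (.inr (α, [])) 1 else 0
  | .arrow α, .inr (β, l) =>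
      if D.tl α = D.hd β ∧ α ≠ D.σF β then .single (.inr (α, β :: l)) 1 else 0

noncomputable def genEnd (g : Gen D) : Module.End ℂ (D.PathCode →₀ ℂ) :=
  Finsupp.linearCombination ℂ (genAct g)

theorem genEnd_single (g : Gen D) (i : D.PathCode) :
    genEnd g (.single i 1) = genAct g i := by
  simp [genEnd]

theorem freeLift_genEnd_rel {x y : FreeAlgebra ℂ (Gen D)} (h : GtlRel D x y) :
    FreeAlgebra.lift ℂ genEnd x = FreeAlgebra.lift ℂ genEnd y := by
  cases h <;> refine Finsupp.basisSingleOne.ext fun i => ?_ <;> rcases i with c | ⟨β, l⟩ <;>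
    simp [genEnd_single, genAct, apply_ite (FreeAlgebra.lift ℂ genEnd)] <;> split_ifs <;>
    simp_all [genEnd_single, genAct]

noncomputable def pathRep (D : ArcDatum) :
    D.Gtl →ₐ[ℂ] Module.End ℂ (D.PathCode →₀ ℂ) :=
  RingQuot.liftAlgHom ℂ ⟨FreeAlgebra.lift ℂ genEnd, fun _ _ => freeLift_genEnd_rel⟩

theorem pathRep_arr (α : D.H) : pathRep D (D.arr α) = genEnd (.arrow α) := by
  simp [pathRep, arr]

noncomputable def toPathVec (D : ArcDatum) : D.Gtl →ₗ[ℂ] D.PathCode →₀ ℂ :=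
  LinearMap.applyₗ (∑ a, .single (.inl a) 1) ∘ₗ (pathRep D).toLinearMap

theorem toPathVec_mul (x y : D.Gtl) : toPathVec D (x * y) = pathRep D x (toPathVec D y) := by
  simp [toPathVec]

theorem toPathVec_vtx (a : D.A) : toPathVec D (D.vtx a) = .single (.inl a) 1 := by
  simp [toPathVec, pathRep, vtx, map_sum, genEnd_single, genAct]

theorem toPathVec_pathProd_cons {β : D.H} {l : List D.H} (h : D.pathProd (β :: l) ≠ 0) :
    toPathVec D (D.pathProd (β :: l)) = .single (.inr (β, l)) 1 := by
  induction l generalizing β with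
  | nil =>
    simp [toPathVec, pathProd_singleton, pathRep_arr, map_sum, genEnd_single, genAct]
  | cons γ l ih =>
    rw [pathProd_cons] at h
    have hγ : D.pathProd (γ :: l) ≠ 0 := right_ne_zero_of_mul h
    have hβγ : D.arr β * D.arr γ ≠ 0 := by
      rw [pathProd_cons, ← mul_assoc] at h
      exact left_ne_zero_of_mul h
    rw [pathProd_cons, toPathVec_mul, ih hγ, pathRep_arr, genEnd_single, genAct,
      if_pos ⟨tl_eq_hd_of_arr_mul_arr_ne_zero hβγ, ne_σF_of_arr_mul_arr_ne_zero hβγ⟩]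

section Normalizer

variable (par : D.H → ZMod 2) (ν : D.Gtl →ₗ[ℂ] D.Gtl →ₗ[ℂ] D.Gtl)

noncomputable def normalizerPath : List D.H → D.Gtl
  | [] | [_] => 0
  | β :: γ :: m => D.arr β * normalizerPath (γ :: m)
      - (-1 : ℂ) ^ (D.listPar par (γ :: m)).val • ν (D.arr β) (D.pathProd (γ :: m))

theorem normalizerPath_singleton (β : D.H) : normalizerPath par ν [β] = 0 := rfl

theorem normalizerPath_cons (β : D.H) {q : List D.H} (hq : q ≠ []) :
    normalizerPath par ν (β :: q) = D.arr β * normalizerPath par ν q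
      - (-1 : ℂ) ^ (D.listPar par q).val • ν (D.arr β) (D.pathProd q) := by
  obtain ⟨γ, m, rfl⟩ := List.exists_cons_of_ne_nil hq
  rfl

theorem neg_one_pow_smul_nu_arr (β : D.H) {q : List D.H} (hq : q ≠ []) :
    (-1 : ℂ) ^ (D.listPar par q).val • ν (D.arr β) (D.pathProd q) =
      D.arr β * normalizerPath par ν q - normalizerPath par ν (β :: q) := by
  rw [normalizerPath_cons par ν β hq, sub_sub_cancel]

noncomputable def normalizer : D.Gtl →ₗ[ℂ] D.Gtl :=
  Finsupp.linearCombination ℂ (Sum.elim 0 fun p => normalizerPath par ν (p.1 :: p.2)) ∘ₗ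
    toPathVec D

theorem normalizer_vtx (a : D.A) : normalizer par ν (D.vtx a) = 0 := by
  simp [normalizer, toPathVec_vtx]

theorem normalizer_pathProd {l : List D.H} (hl : l ≠ []) (h : D.pathProd l ≠ 0) :
    normalizer par ν (D.pathProd l) = normalizerPath par ν l := by
  obtain ⟨β, l, rfl⟩ := List.exists_cons_of_ne_nil hl
  simp [normalizer, toPathVec_pathProd_cons h]

theorem normalizer_arr (α : D.H) : normalizer par ν (D.arr α) = 0 := by
  by_cases h : D.arr α = 0
  · rw [h, map_zero]
  · rw [← pathProd_singleton, normalizer_pathProd par ν (List.cons_ne_nil α [])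
      (by rwa [pathProd_singleton]), normalizerPath_singleton]

end Normalizer

theorem Composable.of_cons {β : D.H} {l : List D.H} (h : D.Composable (β :: l)) :
    D.Composable l :=
  List.IsChain.tail h

namespace PathIdx

def vtx (a : D.A) : D.PathIdx := Sum.inl a

def ofList (l : List D.H) (hl : l ≠ []) (hc : D.Composable l) : D.PathIdx :=
  Sum.inr ⟨l, hl, hc⟩

def arrow (β : D.H) : D.PathIdx :=
  ofList [β] (List.cons_ne_nil β []) (List.isChain_singleton β)

@[simp] theorem pathElem_vtx (a : D.A) : D.pathElem (vtx a) = D.vtx a := rfl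

@[simp] theorem pathPar_vtx (par : D.H → ZMod 2) (a : D.A) : D.pathPar par (vtx a) = 0 := rfl

@[simp] theorem pathElem_ofList (l : List D.H) (hl : l ≠ []) (hc : D.Composable l) :
    D.pathElem (ofList l hl hc) = D.pathProd l := rfl

@[simp] theorem pathPar_ofList (par : D.H → ZMod 2) (l : List D.H) (hl : l ≠ [])
    (hc : D.Composable l) : D.pathPar par (ofList l hl hc) = D.listPar par l := rfl

@[simp] theorem pathElem_arrow (β : D.H) : D.pathElem (arrow β) = D.arr β :=
  pathProd_singleton β

theorem eq_vtx_or_eq_ofList (p : D.PathIdx) :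
    (∃ a, p = vtx a) ∨ ∃ l hl hc, p = ofList l hl hc := by
  rcases p with a | ⟨l, hl, hc⟩
  exacts [.inl ⟨a, rfl⟩, .inr ⟨l, hl, hc, rfl⟩]

end PathIdx

open PathIdx

def IsGradedCocycle (par : D.H → ZMod 2) (ν : D.Gtl →ₗ[ℂ] D.Gtl →ₗ[ℂ] D.Gtl) :
    Prop :=
  ∀ x y z : D.PathIdx,
    (-1 : ℂ) ^ (D.pathPar par y).val • (ν (D.pathElem x) (D.pathElem y) * D.pathElem z)
    + (-1 : ℂ) ^ (D.pathPar par z).val • ν (D.pathElem x * D.pathElem y) (D.pathElem z)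
    - (-1 : ℂ) ^ (D.pathPar par z).val • (D.pathElem x * ν (D.pathElem y) (D.pathElem z))
    - (-1 : ℂ) ^ (D.pathPar par y + D.pathPar par z).val •
        ν (D.pathElem x) (D.pathElem y * D.pathElem z) = 0

namespace IsGradedCocycle

variable {par : D.H → ZMod 2} {ν : D.Gtl →ₗ[ℂ] D.Gtl →ₗ[ℂ] D.Gtl}

theorem nu_vtx_mul (hν : IsGradedCocycle par ν)
    (hleft : ∀ (a : D.A) (x : D.Gtl), ν (D.vtx a) x = 0) (a : D.A) (y z : D.PathIdx) :
    ν (D.vtx a * D.pathElem y) (D.pathElem z) = D.vtx a * ν (D.pathElem y) (D.pathElem z) := by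
  have h := hν (.vtx a) y z
  simp only [pathElem_vtx, hleft, zero_mul, smul_zero, zero_add, sub_zero] at h
  exact smul_right_injective D.Gtl (pow_ne_zero _ (neg_ne_zero.mpr one_ne_zero))
    (sub_eq_zero.mp h)

theorem nu_mul_vtx (hν : IsGradedCocycle par ν)
    (hright : ∀ (a : D.A) (x : D.Gtl), ν x (D.vtx a) = 0) (x y : D.PathIdx) (a : D.A) :
    ν (D.pathElem x) (D.pathElem y * D.vtx a) = ν (D.pathElem x) (D.pathElem y) * D.vtx a := by
  have h := hν x y (.vtx a)
  simp only [pathElem_vtx, pathPar_vtx, add_zero, hright, mul_zero, smul_zero, sub_zero] at h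
  exact (smul_right_injective D.Gtl (pow_ne_zero _ (neg_ne_zero.mpr one_ne_zero))
    (sub_eq_zero.mp h)).symm

theorem neg_one_pow_smul_nu_pathProd (hν : IsGradedCocycle par ν) {p q : List D.H}
    (hp : p ≠ []) (hpc : D.Composable p) (hq : q ≠ []) (hqc : D.Composable q) :
    (-1 : ℂ) ^ (D.listPar par q).val • ν (D.pathProd p) (D.pathProd q) =
      normalizerPath par ν p * D.pathProd q + D.pathProd p * normalizerPath par ν q
        - normalizerPath par ν (p ++ q) := by
  induction p with
  | nil => exact absurd rfl hp
  | cons β y ih =>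
    rcases eq_or_ne y [] with rfl | hy
    · rw [pathProd_singleton, neg_one_pow_smul_nu_arr par ν β hq, normalizerPath_singleton,
        zero_mul, zero_add, List.singleton_append]
    have hyc : D.Composable y := hpc.of_cons
    have h := hν (arrow β) (ofList y hy hyc) (ofList q hq hqc)
    simp only [pathElem_arrow, pathElem_ofList, pathPar_ofList, ← pathProd_append,
      ← listPar_append] at h
    rw [← smul_mul_assoc, neg_one_pow_smul_nu_arr par ν β hy, ← mul_smul_comm, ih hy hyc,
      neg_one_pow_smul_nu_arr par ν β (List.append_ne_nil_of_left_ne_nil hy q)] at h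
    rw [List.cons_append, pathProd_cons, ← sub_eq_zero, ← h]
    simp only [mul_add, mul_sub, sub_mul, mul_assoc] at h ⊢
    abel

theorem vtx_hd_mul_normalizerPath (hν : IsGradedCocycle par ν)
    (hleft : ∀ (a : D.A) (x : D.Gtl), ν (D.vtx a) x = 0)
    {β : D.H} {l : List D.H} (hc : D.Composable (β :: l)) :
    D.vtx (D.hd β) * normalizerPath par ν (β :: l) = normalizerPath par ν (β :: l) := by
  rcases eq_or_ne l [] with rfl | hl
  · rw [normalizerPath_singleton, mul_zero]
  have h := hν.nu_vtx_mul hleft (D.hd β) (arrow β) (ofList l hl hc.of_cons)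
  simp only [pathElem_arrow, pathElem_ofList, vtx_hd_mul_arr] at h
  rw [normalizerPath_cons par ν β hl, mul_sub, ← mul_assoc, vtx_hd_mul_arr, mul_smul_comm,
    ← h]

theorem normalizerPath_mul_vtx_tl_getLast (hν : IsGradedCocycle par ν)
    (hright : ∀ (a : D.A) (x : D.Gtl), ν x (D.vtx a) = 0)
    {l : List D.H} (hl : l ≠ []) (hc : D.Composable l) :
    normalizerPath par ν l * D.vtx (D.tl (l.getLast hl)) = normalizerPath par ν l := by
  induction l with
  | nil => exact absurd rfl hl
  | cons β y ih =>
    rcases eq_or_ne y [] with rfl | hy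
    · rw [normalizerPath_singleton, zero_mul]
    have hyc : D.Composable y := hc.of_cons
    have h := hν.nu_mul_vtx hright (arrow β) (ofList y hy hyc) (D.tl (y.getLast hy))
    simp only [pathElem_arrow, pathElem_ofList, pathProd_mul_vtx hy, if_pos] at h
    rw [List.getLast_cons hy, normalizerPath_cons par ν β hy, sub_mul, mul_assoc, ih hy hyc,
      smul_mul_assoc, ← h]

theorem normalizer_vtx_mul (hν : IsGradedCocycle par ν)
    (hleft : ∀ (a : D.A) (x : D.Gtl), ν (D.vtx a) x = 0)
    (a : D.A) (q : D.PathIdx) :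
    normalizer par ν (D.vtx a * D.pathElem q) = D.vtx a * normalizer par ν (D.pathElem q) := by
  rcases q.eq_vtx_or_eq_ofList with ⟨b, rfl⟩ | ⟨l, hl, hc, rfl⟩
  · rw [pathElem_vtx, vtx_mul_vtx]
    split_ifs <;> simp [normalizer_vtx]
  rw [pathElem_ofList]
  by_cases h0 : D.pathProd l = 0
  · rw [h0, mul_zero, map_zero, mul_zero]
  obtain ⟨β, l, rfl⟩ := List.exists_cons_of_ne_nil hl
  rw [normalizer_pathProd par ν hl h0, ← hν.vtx_hd_mul_normalizerPath hleft hc, ← mul_assoc,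
    vtx_mul_vtx, vtx_mul_pathProd_cons]
  split_ifs with h
  · rw [normalizer_pathProd par ν hl h0, h, hν.vtx_hd_mul_normalizerPath hleft hc]
  · rw [map_zero, zero_mul]

theorem normalizer_mul_vtx (hν : IsGradedCocycle par ν)
    (hright : ∀ (a : D.A) (x : D.Gtl), ν x (D.vtx a) = 0)
    (p : D.PathIdx) (b : D.A) :
    normalizer par ν (D.pathElem p * D.vtx b) = normalizer par ν (D.pathElem p) * D.vtx b := by
  rcases p.eq_vtx_or_eq_ofList with ⟨a, rfl⟩ | ⟨l, hl, hc, rfl⟩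
  · rw [pathElem_vtx, vtx_mul_vtx]
    split_ifs <;> simp [normalizer_vtx]
  rw [pathElem_ofList]
  by_cases h0 : D.pathProd l = 0
  · rw [h0, zero_mul, map_zero, zero_mul]
  rw [normalizer_pathProd par ν hl h0, ← hν.normalizerPath_mul_vtx_tl_getLast hright hl hc,
    mul_assoc, vtx_mul_vtx, pathProd_mul_vtx hl]
  split_ifs
  · rw [normalizer_pathProd par ν hl h0, hν.normalizerPath_mul_vtx_tl_getLast hright hl hc]
  · rw [map_zero, mul_zero]

end IsGradedCocycle

end ArcDatum

open ArcDatum in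
/-- Every normalized graded Hochschild 2-cocycle `ν` of the gentle algebra is,
on pairs of paths with nonvanishing product, the coboundary of a `ℂ`-linear
map `ε` vanishing on the vertex idempotents and on the angle arrows. -/
theorem hochschild_two_cocycle_normalization (D : ArcDatum) (par : D.H → ZMod 2)
    (ν : D.Gtl →ₗ[ℂ] D.Gtl →ₗ[ℂ] D.Gtl)
    (hleft : ∀ (a : D.A) (x : D.Gtl), ν (D.vtx a) x = 0)
    (hright : ∀ (a : D.A) (x : D.Gtl), ν x (D.vtx a) = 0)
    (hcocycle : ∀ x y z : ArcDatum.PathIdx D,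
      ((-1 : ℂ)) ^ (D.pathPar par y).val • (ν (D.pathElem x) (D.pathElem y) * D.pathElem z)
      + ((-1 : ℂ)) ^ (D.pathPar par z).val • ν (D.pathElem x * D.pathElem y) (D.pathElem z)
      - ((-1 : ℂ)) ^ (D.pathPar par z).val • (D.pathElem x * ν (D.pathElem y) (D.pathElem z))
      - ((-1 : ℂ)) ^ (D.pathPar par y + D.pathPar par z).val •
          ν (D.pathElem x) (D.pathElem y * D.pathElem z) = 0) :
    ∃ ε : D.Gtl →ₗ[ℂ] D.Gtl,
      (∀ a : D.A, ε (D.vtx a) = 0) ∧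
      (∀ α : D.H, ε (D.arr α) = 0) ∧
      ∀ p q : ArcDatum.PathIdx D, D.pathElem p * D.pathElem q ≠ 0 →
        ν (D.pathElem p) (D.pathElem q) =
          ((-1 : ℂ)) ^ (D.pathPar par q).val •
            (ε (D.pathElem p) * D.pathElem q + D.pathElem p * ε (D.pathElem q)
              - ε (D.pathElem p * D.pathElem q)) := by
  have hν : IsGradedCocycle par ν := hcocycle
  refine ⟨normalizer par ν, normalizer_vtx par ν, normalizer_arr par ν, fun p q hpq => ?_⟩
  rcases p.eq_vtx_or_eq_ofList with ⟨a, rfl⟩ | ⟨l, hl, hlc, rfl⟩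
  · simp only [PathIdx.pathElem_vtx, hleft, hν.normalizer_vtx_mul hleft, normalizer_vtx]
    simp
  rcases q.eq_vtx_or_eq_ofList with ⟨b, rfl⟩ | ⟨m, hm, hmc, rfl⟩
  · simp only [PathIdx.pathElem_vtx, hright, hν.normalizer_mul_vtx hright, normalizer_vtx]
    simp
  simp only [PathIdx.pathElem_ofList, PathIdx.pathPar_ofList] at hpq ⊢
  have hlm : D.pathProd (l ++ m) ≠ 0 := by rwa [pathProd_append]
  rw [normalizer_pathProd par ν hl (left_ne_zero_of_mul hpq),
    normalizer_pathProd par ν hm (right_ne_zero_of_mul hpq), ← pathProd_append,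
    normalizer_pathProd par ν (List.append_ne_nil_of_left_ne_nil hl m) hlm,
    ← hν.neg_one_pow_smul_nu_pathProd hl hlc hm hmc, smul_smul, neg_one_pow_mul_self, one_smul]
end

section
/- Let D be a combinatorial arc datum satisfying [NMD]. For an arc a ∈ 𝒜 and an angle arrow α with h(α) = a, set ν_{a,α} := e_α − e_{σ_F(α)} ∈ ℂ^H (where e_β denotes the indicator function of β). Then: (i) ν_{a,α} ∈ S; (ii) for the two angle arrows α, α′ with head a, one has ν_{a,α} + ν_{a,α′} ∈ B; (iii) if 𝒯 ⊆ 𝒜 is the edge set of a spanning tree of the face graph Γ of D and for each a ∈ 𝒜∖𝒯 an angle arrow α_a with h(α_a) = a is chosen, then the classes ν_{a,α_a} + B, a ∈ 𝒜∖𝒯, form a ℂ-basis of the quotient space S/B. -/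
open scoped Classical

namespace ArcDatum

variable (D : ArcDatum)

/-- The subspace `S = {λ ∈ ℂ^H : Σ_{α ∈ f} λ_α = 0 for every face f}`. -/
noncomputable def Ssub : Submodule ℂ (D.H → ℂ) where
  carrier := {v | ∀ f : D.Face, ∑ α ∈ D.fOrbitFinset f.out, v α = 0}
  add_mem' := by
    intro a b ha hb f
    simp only [Pi.add_apply, Finset.sum_add_distrib, ha f, hb f, add_zero]
  zero_mem' := by intro f; simp
  smul_mem' := by
    intro c v hv f
    simp only [Pi.smul_apply, smul_eq_mul, ← Finset.mul_sum, hv f, mul_zero]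

/-- The subspace `B = {λ ∈ ℂ^H : λ_α = e_{h(α)} − e_{t(α)} for some e ∈ ℂ^𝒜}`. -/
noncomputable def Bsub : Submodule ℂ (D.H → ℂ) where
  carrier := {v | ∃ e : D.A → ℂ, ∀ α : D.H, v α = e (D.hd α) - e (D.tl α)}
  add_mem' := by
    rintro a b ⟨e, he⟩ ⟨e', he'⟩
    exact ⟨e + e', fun α => by simp [he α, he' α]; ring⟩
  zero_mem' := ⟨0, fun α => by simp⟩
  smul_mem' := by
    rintro c v ⟨e, he⟩
    exact ⟨c • e, fun α => by simp [he α]; ring⟩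

/-- The arc class `ν_{a,α} = e_α − e_{σF α}` attached to an angle arrow `α`
(with head the arc `a`). -/
noncomputable def nuArc (α : D.H) : D.H → ℂ :=
  fun β => (if β = α then 1 else 0) - (if β = D.σF α then 1 else 0)

/-- `𝒯 ⊆ 𝒜` is the edge set of a spanning tree of the face graph: the faces
are connected by edges of `𝒯` (the edge of an arc `a` joins the faces of the
two angle arrows with head `a`), and `#𝒯 = #F − 1`. -/
def IsSpanningTree (𝒯 : Finset D.A) : Prop :=
  (∀ f g : D.Face, Relation.ReflTransGen
    (fun f g => ∃ a ∈ 𝒯, ∃ α β : D.H,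
      D.hd α = a ∧ D.hd β = a ∧ D.faceCls α = f ∧ D.faceCls β = g) f g) ∧
  (𝒯.card : ℤ) = (Nat.card D.Face : ℤ) - 1

end ArcDatum

/-!
Both the arc classes and `B` are images of `faceDiff : ρ ↦ ρ - ρ ∘ σF⁻¹`, whose kernel consists
of the functions constant on faces. As `dim S = |H| - |F| = 2|𝒜| - |F|` and `dim B ≥ |𝒜| - 1`
(the quiver is connected), `dim S/B ≤ |𝒜| - |F| + 1 = |𝒜 ∖ 𝒯|`, so linear independence
suffices. If `Σ c_a ν_{α_a} = coboundary e`, then `ψ := Σ c_a 1_{α_a} - e ∘ h` lies in that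
kernel. It equals `-e(a)` on both arrows with head a tree arc `a`, so by connectivity of the tree
it is constant; comparing its values `c_a - e(a)` and `-e(a)` on the two arrows with head a
non-tree arc gives `c_a = 0`.
-/

namespace ArcDatum

variable (D : ArcDatum)

lemma mem_fOrbitFinset_out {f : D.Face} {β : D.H} :
    β ∈ D.fOrbitFinset f.out ↔ D.faceCls β = f := by
  rw [fOrbitFinset, Set.Finite.mem_toFinset, Set.mem_ofPred_eq, Equiv.Perm.sameCycle_comm]
  conv_rhs => rw [← Quotient.out_eq (s := D.fSetoid) f]
  exact (@Quotient.eq _ D.fSetoid β f.out).symm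

lemma tl_eq_hd_symm (β : D.H) : D.tl β = D.hd (D.σF.symm β) := by
  simpa using D.tl_σF (D.σF.symm β)

lemma eq_or_eq_of_hd_eq {α α' β : D.H} (hne : α ≠ α') (hα' : D.hd α' = D.hd α)
    (hβ : D.hd β = D.hd α) : β = α ∨ β = α' := by
  by_contra! h
  have hsub : ({α, α', β} : Finset D.H) ⊆ Finset.univ.filter (D.hd · = D.hd α) := by
    intro γ
    simp only [Finset.mem_insert, Finset.mem_singleton, Finset.mem_filter, Finset.mem_univ,
      true_and]
    rintro (rfl | rfl | rfl) <;> first | rfl | assumption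
  have := Finset.card_le_card hsub
  rw [Finset.card_eq_three.mpr ⟨α, α', β, hne, h.1.symm, h.2.symm, rfl⟩,
    ← Fintype.card_subtype, D.two_in] at this
  omega

lemma exists_ne_hd_eq (α : D.H) : ∃ α', α' ≠ α ∧ D.hd α' = D.hd α := by
  obtain ⟨⟨α', hα'⟩, hne⟩ := Fintype.exists_ne_of_one_lt_card (by rw [D.two_in]; norm_num)
    (⟨α, rfl⟩ : {e // D.hd e = D.hd α})
  exact ⟨α', fun h => hne (Subtype.ext h), hα'⟩

lemma card_H_eq_two_mul : Fintype.card D.H = 2 * Fintype.card D.A := by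
  rw [← Fintype.card_congr (Equiv.sigmaFiberEquiv D.hd), Fintype.card_sigma]
  simp [D.two_in, mul_comm]

noncomputable def faceDiff : (D.H → ℂ) →ₗ[ℂ] (D.H → ℂ) :=
  LinearMap.id - LinearMap.funLeft ℂ ℂ D.σF.symm

lemma faceDiff_apply (ρ : D.H → ℂ) (β : D.H) :
    D.faceDiff ρ β = ρ β - ρ (D.σF.symm β) := rfl

lemma nuArc_eq_faceDiff (α : D.H) : D.nuArc α = D.faceDiff (Pi.single α 1) := by
  ext β
  simp [nuArc, faceDiff_apply, Pi.single_apply, Equiv.symm_apply_eq]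

lemma faceDiff_mem_Ssub (ρ : D.H → ℂ) : D.faceDiff ρ ∈ D.Ssub := by
  intro f
  simp only [faceDiff_apply, Finset.sum_sub_distrib, sub_eq_zero]
  exact Finset.sum_equiv D.σF (fun β => by simp [fOrbitFinset]) (fun β _ => by simp)

lemma nuArc_mem_Ssub (α : D.H) : D.nuArc α ∈ D.Ssub :=
  D.nuArc_eq_faceDiff α ▸ D.faceDiff_mem_Ssub _

lemma apply_eq_of_faceDiff_eq_zero {ρ : D.H → ℂ} (hρ : D.faceDiff ρ = 0) {α β : D.H}
    (h : D.faceCls α = D.faceCls β) : ρ α = ρ β := by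
  have step : ∀ γ, ρ (D.σF γ) = ρ γ := fun γ => by
    simpa [faceDiff_apply, sub_eq_zero] using congrFun hρ (D.σF γ)
  obtain ⟨n, rfl⟩ := (Quotient.exact h : D.σF.SameCycle α β).exists_nat_pow_eq
  clear h
  induction n with
  | zero => rfl
  | succ n ih => rw [pow_succ', Equiv.Perm.mul_apply, step, ih]

noncomputable def coboundary : (D.A → ℂ) →ₗ[ℂ] (D.H → ℂ) :=
  D.faceDiff ∘ₗ LinearMap.funLeft ℂ ℂ D.hd

lemma coboundary_apply (e : D.A → ℂ) (α : D.H) :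
    D.coboundary e α = e (D.hd α) - e (D.tl α) := by
  simp [coboundary, faceDiff_apply, LinearMap.funLeft_apply, tl_eq_hd_symm]

lemma range_coboundary : LinearMap.range D.coboundary = D.Bsub := by
  ext v
  simp [Bsub, funext_iff, coboundary_apply, eq_comm]

lemma Bsub_le_Ssub : D.Bsub ≤ D.Ssub := by
  rw [← range_coboundary]
  rintro _ ⟨e, rfl⟩
  exact D.faceDiff_mem_Ssub _

lemma nuArc_add_mem_Bsub {α α' : D.H} (hα' : D.hd α' = D.hd α) (hne : α ≠ α') :
    D.nuArc α + D.nuArc α' ∈ D.Bsub := by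
  have hfiber : Pi.single α 1 + Pi.single α' 1 = Pi.single (D.hd α) (1 : ℂ) ∘ D.hd := by
    ext β
    by_cases hβ : D.hd β = D.hd α
    · rcases D.eq_or_eq_of_hd_eq hne hα' hβ with rfl | rfl <;>
        simp [hne, hne.symm, hα']
    · have : β ≠ α := by rintro rfl; exact hβ rfl
      have : β ≠ α' := by rintro rfl; exact hβ hα'
      simp [*]
  rw [nuArc_eq_faceDiff, nuArc_eq_faceDiff, ← map_add, hfiber, ← range_coboundary]
  exact ⟨Pi.single (D.hd α) 1, rfl⟩

lemma ker_coboundary_le :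
    LinearMap.ker D.coboundary ≤ Submodule.span ℂ {fun _ => 1} := by
  intro e he
  have hconst : ∀ a b, e a = e b := fun a b => by
    induction D.connected a b with
    | refl => rfl
    | tail _ hstep ih =>
      obtain ⟨γ, hγ⟩ := hstep
      have := congrFun he γ
      rw [coboundary_apply, Pi.zero_apply, sub_eq_zero] at this
      rcases hγ with ⟨rfl, rfl⟩ | ⟨rfl, rfl⟩ <;> rw [ih, this]
  rcases isEmpty_or_nonempty D.A with hA | ⟨⟨a⟩⟩
  · simp [Subsingleton.elim e 0]
  · exact Submodule.mem_span_singleton.mpr ⟨e a, funext fun b => by simp [hconst a b]⟩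

lemma card_A_le_finrank_Bsub_add_one :
    Fintype.card D.A ≤ Module.finrank ℂ D.Bsub + 1 := by
  have hker : Module.finrank ℂ (LinearMap.ker D.coboundary) ≤ 1 := by
    refine (Submodule.finrank_mono D.ker_coboundary_le).trans ?_
    simpa using finrank_span_le_card ({fun _ => 1} : Set (D.A → ℂ))
  have := LinearMap.finrank_range_add_finrank_ker D.coboundary
  rw [range_coboundary, Module.finrank_pi] at this
  omega

noncomputable def faceSum : (D.H → ℂ) →ₗ[ℂ] (D.Face → ℂ) where
  toFun v f := ∑ β ∈ D.fOrbitFinset f.out, v β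
  map_add' _ _ := by ext; simp [Finset.sum_add_distrib]
  map_smul' _ _ := by ext; simp [Finset.mul_sum]

lemma ker_faceSum : LinearMap.ker D.faceSum = D.Ssub := by
  ext v
  simp [faceSum, funext_iff, Ssub]

lemma faceSum_surjective : Function.Surjective D.faceSum := by
  intro u
  refine ⟨fun β => if β = (D.faceCls β).out then u (D.faceCls β) else 0, funext fun f => ?_⟩
  change ∑ β ∈ D.fOrbitFinset f.out, _ = u f
  rw [Finset.sum_congr rfl fun β hβ => by rw [D.mem_fOrbitFinset_out.mp hβ], Finset.sum_ite_eq']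
  exact if_pos (D.mem_fOrbitFinset_out.mpr (Quotient.out_eq (s := D.fSetoid) f))

lemma finrank_Ssub_add_card_Face :
    Module.finrank ℂ D.Ssub + Fintype.card D.Face = Fintype.card D.H := by
  have := LinearMap.finrank_range_add_finrank_ker D.faceSum
  rw [ker_faceSum, LinearMap.range_eq_top.mpr D.faceSum_surjective, finrank_top,
    Module.finrank_pi, Module.finrank_pi] at this
  omega

lemma finrank_quotient_add_card_Face_le :
    Module.finrank ℂ (D.Ssub ⧸ D.Bsub.comap D.Ssub.subtype) + Fintype.card D.Face ≤
      Fintype.card D.A + 1 := by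
  have hquot := Submodule.finrank_quotient_add_finrank (D.Bsub.comap D.Ssub.subtype)
  have hB := (Submodule.comapSubtypeEquivOfLe D.Bsub_le_Ssub).finrank_eq
  have hS := D.finrank_Ssub_add_card_Face
  have hA := D.card_A_le_finrank_Bsub_add_one
  have hH := D.card_H_eq_two_mul
  omega

def TreeAdj (T : Finset D.A) (f g : D.Face) : Prop :=
  ∃ a ∈ T, ∃ α β : D.H, D.hd α = a ∧ D.hd β = a ∧ D.faceCls α = f ∧ D.faceCls β = g

lemma eq_of_reflTransGen_treeAdj {X : Type*} {T : Finset D.A} {ψ : D.H → X}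
    (hface : ∀ α β, D.faceCls α = D.faceCls β → ψ α = ψ β)
    (harc : ∀ α β, D.hd α = D.hd β → D.hd α ∈ T → ψ α = ψ β) {α β : D.H}
    (h : Relation.ReflTransGen (D.TreeAdj T) (D.faceCls α) (D.faceCls β)) : ψ α = ψ β := by
  suffices ∀ g, Relation.ReflTransGen (D.TreeAdj T) (D.faceCls α) g →
      ∀ β, D.faceCls β = g → ψ α = ψ β from this _ h β rfl
  intro g hg
  induction hg with
  | refl => exact fun β hβ => hface α β hβ.symm
  | tail _ hstep ih =>
    obtain ⟨a, ha, γ, γ', hγ, hγ', hγf, hγ'g⟩ := hstep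
    intro β hβ
    rw [ih γ hγf, harc γ γ' (hγ.trans hγ'.symm) (hγ ▸ ha), hface γ' β (hγ'g.trans hβ.symm)]

section Selection

variable {D} {T : Finset D.A} {sel : ∀ a, a ∉ T → D.H}

lemma sum_smul_single_sel_apply_eq_zero (c : {a // a ∉ T} → ℂ) {β : D.H}
    (hβ : ∀ a h, sel a h ≠ β) : (∑ a, c a • Pi.single (sel a.1 a.2) (1 : ℂ)) β = 0 := by
  simp [Finset.sum_apply, hβ]

lemma sum_smul_single_sel_apply_sel (hsel : ∀ a h, D.hd (sel a h) = a)
    (c : {a // a ∉ T} → ℂ) (a : {a // a ∉ T}) :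
    (∑ a, c a • Pi.single (sel a.1 a.2) (1 : ℂ)) (sel a.1 a.2) = c a := by
  rw [Finset.sum_apply, Fintype.sum_eq_single a]
  · simp
  · intro b hb
    have : sel a.1 a.2 ≠ sel b.1 b.2 := fun h =>
      hb (Subtype.ext (by rw [← hsel b.1 b.2, ← h, hsel]))
    simp [this]

lemma eq_zero_of_sum_smul_nuArc_mem_Bsub
    (hconn : ∀ f g, Relation.ReflTransGen (D.TreeAdj T) f g)
    (hsel : ∀ a h, D.hd (sel a h) = a) (c : {a // a ∉ T} → ℂ)
    (hc : ∑ a, c a • D.nuArc (sel a.1 a.2) ∈ D.Bsub) (a : {a // a ∉ T}) : c a = 0 := by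
  set ρ := ∑ a, c a • Pi.single (sel a.1 a.2) (1 : ℂ)
  obtain ⟨e, he⟩ : ∃ e, D.coboundary e = D.faceDiff ρ := by
    rw [← range_coboundary] at hc
    simpa [ρ, map_sum, nuArc_eq_faceDiff] using hc
  set ψ := ρ - e ∘ D.hd
  have hψ : D.faceDiff ψ = 0 := by
    rw [map_sub, ← he, sub_eq_zero]
    rfl
  have hρ_tree : ∀ γ, D.hd γ ∈ T → ρ γ = 0 := fun γ hγ =>
    sum_smul_single_sel_apply_eq_zero c fun b hb h => hb (hsel b hb ▸ h ▸ hγ)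
  have hconst : ∀ α β, ψ α = ψ β := fun α β =>
    D.eq_of_reflTransGen_treeAdj (fun _ _ => D.apply_eq_of_faceDiff_eq_zero hψ)
      (fun α β hαβ hT => by simp [ψ, hρ_tree α hT, hρ_tree β (hαβ ▸ hT), hαβ]) (hconn _ _)
  obtain ⟨α', hne, hhd⟩ := D.exists_ne_hd_eq (sel a.1 a.2)
  have hρα' : ρ α' = 0 := sum_smul_single_sel_apply_eq_zero c fun b hb h => by
    obtain rfl : b = a.1 := by rw [← hsel b hb, h, hhd, hsel]
    exact hne h.symm
  have hρα : ρ (sel a.1 a.2) = c a := sum_smul_single_sel_apply_sel hsel c a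
  simpa [ψ, hρα, hρα', hhd] using hconst (sel a.1 a.2) α'

lemma linearIndependent_mk_nuArc (hconn : ∀ f g, Relation.ReflTransGen (D.TreeAdj T) f g)
    (hsel : ∀ a h, D.hd (sel a h) = a) :
    LinearIndependent ℂ fun a : {a // a ∉ T} =>
      (Submodule.Quotient.mk ⟨D.nuArc (sel a.1 a.2), D.nuArc_mem_Ssub _⟩ :
        D.Ssub ⧸ D.Bsub.comap D.Ssub.subtype) := by
  rw [Fintype.linearIndependent_iff]
  intro c hc
  refine eq_zero_of_sum_smul_nuArc_mem_Bsub hconn hsel c ?_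
  simp_rw [← Submodule.mkQ_apply, ← map_smul, ← map_sum, Submodule.mkQ_apply,
    Submodule.Quotient.mk_eq_zero, Submodule.mem_comap] at hc
  simpa using hc

end Selection

lemma IsSpanningTree.card_compl_add_card_Face {T : Finset D.A} (hT : D.IsSpanningTree T) :
    Fintype.card {a // a ∉ T} + Fintype.card D.Face = Fintype.card D.A + 1 := by
  have hcard := hT.2
  rw [Nat.card_eq_fintype_card] at hcard
  have hle := T.card_le_univ
  rw [Fintype.card_subtype_compl, Fintype.card_coe]
  omega

end ArcDatum

open ArcDatum in
theorem arc_classes_basis_general (D : ArcDatum) :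
    (∀ (a : D.A) (α : D.H), D.hd α = a → D.nuArc α ∈ D.Ssub) ∧
    (∀ (a : D.A) (α α' : D.H), D.hd α = a → D.hd α' = a → α ≠ α' →
      D.nuArc α + D.nuArc α' ∈ D.Bsub) ∧
    (∀ hS : ∀ α : D.H, D.nuArc α ∈ D.Ssub,
      ∀ 𝒯 : Finset D.A, D.IsSpanningTree 𝒯 →
      ∀ sel : ∀ a : D.A, a ∉ 𝒯 → D.H, (∀ (a : D.A) (h : a ∉ 𝒯), D.hd (sel a h) = a) →
      ∃ B : Module.Basis {a : D.A // a ∉ 𝒯} ℂ (↥D.Ssub ⧸ (D.Bsub.comap D.Ssub.subtype)),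
        ∀ a : {a : D.A // a ∉ 𝒯},
          B a = Submodule.Quotient.mk
            (⟨D.nuArc (sel a.1 a.2), hS (sel a.1 a.2)⟩ : D.Ssub)) := by
  refine ⟨fun _ α _ => D.nuArc_mem_Ssub α,
    fun _ α α' hα hα' hne => D.nuArc_add_mem_Bsub (hα'.trans hα.symm) hne, ?_⟩
  intro _ 𝒯 hT sel hsel
  have hli := linearIndependent_mk_nuArc hT.1 hsel
  have hcard := hli.fintype_card_le_finrank
  have hdim := D.finrank_quotient_add_card_Face_le
  have htree := hT.card_compl_add_card_Face
  exact ⟨basisOfLinearIndependentOfCardEqFinrank' _ hli (by omega), fun _ => by simp⟩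

open ArcDatum in
/-- (i) the arc classes `ν_{a,α}` lie in `S`; (ii) for the two angle arrows
`α, α'` with head `a` one has `ν_{a,α} + ν_{a,α'} ∈ B`; (iii) for a spanning
tree `𝒯` of the face graph and any choice of angle arrows `α_a` with head `a`,
the classes `ν_{a,α_a} + B`, `a ∈ 𝒜 ∖ 𝒯`, form a `ℂ`-basis of `S/B`. -/
theorem arc_classes_basis (D : ArcDatum) (hNMD : D.NMD) :
    (∀ (a : D.A) (α : D.H), D.hd α = a → D.nuArc α ∈ D.Ssub) ∧
    (∀ (a : D.A) (α α' : D.H), D.hd α = a → D.hd α' = a → α ≠ α' →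
      D.nuArc α + D.nuArc α' ∈ D.Bsub) ∧
    (∀ hS : ∀ α : D.H, D.nuArc α ∈ D.Ssub,
      ∀ 𝒯 : Finset D.A, D.IsSpanningTree 𝒯 →
      ∀ sel : ∀ a : D.A, a ∉ 𝒯 → D.H, (∀ (a : D.A) (h : a ∉ 𝒯), D.hd (sel a h) = a) →
      ∃ B : Module.Basis {a : D.A // a ∉ 𝒯} ℂ (↥D.Ssub ⧸ (D.Bsub.comap D.Ssub.subtype)),
        ∀ a : {a : D.A // a ∉ 𝒯},
          B a = Submodule.Quotient.mk
            (⟨D.nuArc (sel a.1 a.2), hS (sel a.1 a.2)⟩ : D.Ssub)) :=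
  arc_classes_basis_general D
end
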